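/- arXiv:2407.04423 — 3 statements merged into one kernel-verified Lean document; each statement's English description precedes it below -/
import Mathlib

section
/- Let ρ be a matrix on ℂ^d ⊗ ℂ^d that is separable, i.e., ρ = ∑_m λ_m σ_m ⊗ τ_m with λ_m ≥ 0, ∑_m λ_m = 1, and σ_m, τ_m positive semidefinite matrices of unit trace on ℂ^d. Then the realigned matrix R(ρ), defined entrywise by R(ρ)((m,μ),(n,ν)) = ρ((m,n),(ν,μ)), satisfies ‖R(ρ)‖_Tr ≤ 1, where ‖X‖_Tr = Tr(√(Xᴴ X)) is the trace norm (the sum of the singular values of X). -/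
open Matrix Kronecker ComplexOrder

/-- The trace norm `‖X‖_Tr = Tr √(Xᴴ X)`, the sum of the singular values of `X`. -/
noncomputable def traceNorm {n : Type*} [Fintype n] [DecidableEq n]
    (X : Matrix n n ℂ) : ℝ :=
  (((Matrix.posSemidef_conjTranspose_mul_self X).1.eigenvectorUnitary : Matrix n n ℂ) *
    diagonal ((fun x : ℝ => ((√x : ℝ) : ℂ)) ∘ (Matrix.posSemidef_conjTranspose_mul_self X).1.eigenvalues) *
    (star ((Matrix.posSemidef_conjTranspose_mul_self X).1.eigenvectorUnitary : Matrix n n ℂ))).trace.re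

/-- A bipartite matrix on `ℂ^d ⊗ ℂ^d` is separable if it is a finite convex
combination of Kronecker products of positive semidefinite unit-trace matrices. -/
def Separable {d : ℕ} (ρ : Matrix (Fin d × Fin d) (Fin d × Fin d) ℂ) : Prop :=
  ∃ (n : ℕ) (lam : Fin n → ℝ) (σ : Fin n → Matrix (Fin d) (Fin d) ℂ)
    (τ : Fin n → Matrix (Fin d) (Fin d) ℂ),
    (∀ m, 0 ≤ lam m) ∧ (∑ m, lam m = 1) ∧
    (∀ m, (σ m).PosSemidef ∧ (σ m).trace = 1) ∧
    (∀ m, (τ m).PosSemidef ∧ (τ m).trace = 1) ∧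
    ρ = ∑ m, (lam m : ℂ) • (σ m ⊗ₖ τ m)

/-- The realignment of a bipartite matrix:
`R(ρ)((m,μ),(n,ν)) = ρ((m,n),(ν,μ))`. -/
def realign {d : ℕ} (ρ : Matrix (Fin d × Fin d) (Fin d × Fin d) ℂ) :
    Matrix (Fin d × Fin d) (Fin d × Fin d) ℂ :=
  Matrix.of fun p q => ρ (p.1, q.1) (q.2, p.2)

/-! Under the indexing convention of `realign`, `R(ρ)` is the partial transpose `ρ^{T_B}` with its
columns permuted by the swap `(i, k) ↦ (k, i)`. For separable `ρ`, `ρ^{T_B} = ∑ λₘ σₘ ⊗ τₘᵀ` is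
positive semidefinite of trace one. If `A ⪰ 0` and `P` is a permutation matrix, then
`(AP)ᴴ(AP) = (PᵀAP)²` with `PᵀAP ⪰ 0`, so `‖AP‖_Tr = Tr(PᵀAP) = Tr A`; hence in fact
`‖R(ρ)‖_Tr = 1`. -/

open scoped MatrixOrder

namespace Matrix

variable {m n : Type*}

/-- `ρ^{T_B}`, the transpose on the second tensor factor. -/
def partialTranspose {R : Type*} (ρ : Matrix (m × n) (m × n) R) : Matrix (m × n) (m × n) R :=
  of fun p q => ρ (p.1, q.2) (q.1, p.2)

lemma partialTranspose_sum_smul_kronecker {R ι : Type*} [CommSemiring R] [Fintype ι]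
    (c : ι → R) (A : ι → Matrix m m R) (B : ι → Matrix n n R) :
    partialTranspose (∑ i, c i • (A i ⊗ₖ B i)) = ∑ i, c i • (A i ⊗ₖ (B i)ᵀ) := by
  ext p q
  simp [partialTranspose, sum_apply]

lemma trace_partialTranspose {R : Type*} [Fintype m] [Fintype n] [AddCommMonoid R]
    (ρ : Matrix (m × n) (m × n) R) : (partialTranspose ρ).trace = ρ.trace := rfl

lemma trace_submatrix_equiv {R : Type*} [Fintype n] [AddCommMonoid R] (A : Matrix n n R)
    (e : n ≃ n) : (A.submatrix e e).trace = A.trace :=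
  e.sum_comp fun i => A i i

variable [Fintype n] [DecidableEq n]

lemma traceNorm_eq_re_trace_sqrt (X : Matrix n n ℂ) :
    traceNorm X = (CFC.sqrt (Xᴴ * X)).trace.re := by
  have hX := posSemidef_conjTranspose_mul_self X
  rw [CFC.sqrt_eq_real_sqrt _ hX.nonneg, cfcₙ_eq_cfc, hX.1.cfc_eq]
  rfl

lemma traceNorm_eq_re_trace_of_mul_self_eq {X B : Matrix n n ℂ} (hB : B.PosSemidef)
    (h : B * B = Xᴴ * X) : traceNorm X = B.trace.re := by
  rw [traceNorm_eq_re_trace_sqrt, CFC.sqrt_unique h hB.nonneg]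

lemma traceNorm_submatrix_equiv_of_posSemidef {A : Matrix n n ℂ} (hA : A.PosSemidef)
    (e : n ≃ n) : traceNorm (A.submatrix id e) = A.trace.re := by
  rw [traceNorm_eq_re_trace_of_mul_self_eq (hA.submatrix e), trace_submatrix_equiv]
  rw [submatrix_mul_equiv, conjTranspose_submatrix, hA.1.eq]
  exact (submatrix_mul_equiv A A e (.refl n) e).symm

end Matrix

open Matrix

lemma realign_eq_submatrix_partialTranspose {d : ℕ}
    (ρ : Matrix (Fin d × Fin d) (Fin d × Fin d) ℂ) :
    realign ρ = (partialTranspose ρ).submatrix id (Equiv.prodComm _ _) :=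
  rfl

lemma Separable.trace_eq_one {d : ℕ} {ρ : Matrix (Fin d × Fin d) (Fin d × Fin d) ℂ}
    (hρ : Separable ρ) : ρ.trace = 1 := by
  obtain ⟨n, lam, σ, τ, -, hsum, hσ, hτ, rfl⟩ := hρ
  simp [trace_sum, trace_kronecker, (hσ _).2, (hτ _).2, ← Complex.ofReal_sum, hsum]

/-- The Peres (PPT) criterion. -/
lemma Separable.posSemidef_partialTranspose {d : ℕ}
    {ρ : Matrix (Fin d × Fin d) (Fin d × Fin d) ℂ} (hρ : Separable ρ) :
    (partialTranspose ρ).PosSemidef := by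
  obtain ⟨n, lam, σ, τ, hlam, -, hσ, hτ, rfl⟩ := hρ
  rw [partialTranspose_sum_smul_kronecker]
  refine posSemidef_sum _ fun m _ => ((hσ m).1.kronecker (hτ m).1.transpose).smul ?_
  exact_mod_cast hlam m

/-- **Realignment (CCNR) criterion, necessity**: every separable bipartite state `ρ`
satisfies `‖R(ρ)‖_Tr ≤ 1`. -/
theorem separable_realign_traceNorm_le_one {d : ℕ}
    (ρ : Matrix (Fin d × Fin d) (Fin d × Fin d) ℂ)
    (hsep : Separable ρ) : traceNorm (realign ρ) ≤ 1 := by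
  rw [realign_eq_submatrix_partialTranspose,
    traceNorm_submatrix_equiv_of_posSemidef hsep.posSemidef_partialTranspose,
    trace_partialTranspose, hsep.trace_eq_one, Complex.one_re]
end

section
/- Let A, B be d×d complex matrices with diag(A) = diag(B), A entrywise nonnegative, B positive semidefinite, and let ρ_(A,B) = ∑_{i,j} A_{ij} |ij⟩⟨ij| + ∑_{i≠j} B_{ij} |ii⟩⟨jj| on ℂ^d ⊗ ℂ^d. Then ρ_(A,B) is PPT — i.e., its partial transpose ρ^{T_B}((i,k),(j,l)) = ρ((i,l),(j,k)) is positive semidefinite — if and only if A_{ij}·A_{ji} ≥ |B_{ij}|² for all i,j. -/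
/-!
The partial transpose of `ρ_(A,B)` only couples `|ij⟩` with `|ji⟩`: up to reordering the basis it
is the direct sum of the `1 × 1` blocks `A_ii` and the `2 × 2` blocks `!![A_ij, B_ij; B_ji, A_ji]`,
`i ≠ j`. A Hermitian `2 × 2` matrix with nonnegative diagonal is positive semidefinite exactly
when its determinant `A_ij A_ji - |B_ij|²` is nonnegative.
-/

open Matrix ComplexOrder

/-- The CLDUI state `ρ_(A,B)` on `ℂ^d ⊗ ℂ^d`: entries `A_{ij}` at positions
`((i,j),(i,j))`, `B_{ij}` at positions `((i,i),(j,j))` for `i ≠ j`, zero elsewhere. -/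
def cldui {d : ℕ} (A B : Matrix (Fin d) (Fin d) ℂ) :
    Matrix (Fin d × Fin d) (Fin d × Fin d) ℂ :=
  Matrix.of fun p q =>
    if p = q then A p.1 p.2
    else if p.1 = p.2 ∧ q.1 = q.2 then B p.1 q.1 else 0

/-- The partial transpose with respect to the second subsystem:
`ρ^{T_B}((i,k),(j,l)) = ρ((i,l),(j,k))`. -/
def partialTransposeB {d : ℕ}
    (ρ : Matrix (Fin d × Fin d) (Fin d × Fin d) ℂ) :
    Matrix (Fin d × Fin d) (Fin d × Fin d) ℂ :=
  Matrix.of fun p q => ρ (p.1, q.2) (q.1, p.2)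

theorem Matrix.posSemidef_fin_two_iff {a b c : ℂ} :
    !![a, b; star b, c].PosSemidef ↔ 0 ≤ a ∧ 0 ≤ c ∧ (Complex.normSq b : ℂ) ≤ a * c := by
  constructor
  · intro h
    have hdet := h.det_nonneg
    rw [det_fin_two_of, Complex.star_def, Complex.mul_conj, sub_nonneg] at hdet
    exact ⟨by simpa using h.diag_nonneg (i := 0), by simpa using h.diag_nonneg (i := 1), hdet⟩
  · rintro ⟨ha, hc, hb⟩
    lift a to ℝ using (Complex.nonneg_iff.1 ha).2.symm
    lift c to ℝ using (Complex.nonneg_iff.1 hc).2.symm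
    rw [Complex.zero_le_real] at ha hc
    rw [← Complex.ofReal_mul, Complex.real_le_real] at hb
    refine .of_dotProduct_mulVec_nonneg ?_ fun x => ?_
    · simp [IsHermitian, ← ext_iff, Fin.forall_fin_two]
    set w := star (x 0) * b * x 1
    have hform : star x ⬝ᵥ (!![(a : ℂ), b; star b, c] *ᵥ x) =
        ((a * Complex.normSq (x 0) + c * Complex.normSq (x 1) + 2 * w.re : ℝ) : ℂ) := by
      rw [Complex.ofReal_add, ← Complex.add_conj]
      simp only [dotProduct, mulVec, Fin.sum_univ_two, Pi.star_apply, of_apply, cons_val',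
        cons_val_fin_one, cons_val_zero, cons_val_one, Complex.star_def, Complex.ofReal_add,
        Complex.ofReal_mul, ← Complex.mul_conj, map_mul, Complex.conj_conj, w]
      ring
    have hw : w.re * w.re ≤ (a * Complex.normSq (x 0)) * (c * Complex.normSq (x 1)) :=
      calc w.re * w.re ≤ Complex.normSq w := Complex.re_sq_le_normSq w
        _ = Complex.normSq b * (Complex.normSq (x 0) * Complex.normSq (x 1)) := by
          rw [Complex.normSq_mul, Complex.normSq_mul, Complex.star_def, Complex.normSq_conj]
          ring
        _ ≤ _ := by
          nlinarith [mul_nonneg (Complex.normSq_nonneg (x 0)) (Complex.normSq_nonneg (x 1))]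
    rw [hform, Complex.zero_le_real]
    have hx0 := mul_nonneg ha (Complex.normSq_nonneg (x 0))
    have hx1 := mul_nonneg hc (Complex.normSq_nonneg (x 1))
    nlinarith [sq_nonneg (a * Complex.normSq (x 0) - c * Complex.normSq (x 1))]

section

variable {d : ℕ}

theorem conjTranspose_partialTransposeB (ρ : Matrix (Fin d × Fin d) (Fin d × Fin d) ℂ) :
    (partialTransposeB ρ)ᴴ = partialTransposeB ρᴴ := by
  ext p q
  simp [partialTransposeB]

theorem Matrix.IsHermitian.partialTransposeB {ρ : Matrix (Fin d × Fin d) (Fin d × Fin d) ℂ}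
    (hρ : ρ.IsHermitian) : (partialTransposeB ρ).IsHermitian := by
  rw [IsHermitian, conjTranspose_partialTransposeB, hρ.eq]

theorem conjTranspose_cldui (A B : Matrix (Fin d) (Fin d) ℂ) :
    (cldui A B)ᴴ = cldui (A.map star) Bᴴ := by
  ext p q
  rcases eq_or_ne p q with rfl | hpq
  · simp [cldui]
  · simp [cldui, hpq, hpq.symm, and_comm, apply_ite (starRingEnd ℂ)]

theorem isHermitian_cldui {A B : Matrix (Fin d) (Fin d) ℂ} (hA : ∀ i j, IsSelfAdjoint (A i j))
    (hB : B.IsHermitian) : (cldui A B).IsHermitian := by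
  rw [IsHermitian, conjTranspose_cldui, hB.eq]
  congr
  ext i j
  exact hA i j

theorem partialTransposeB_cldui_row (A B : Matrix (Fin d) (Fin d) ℂ) (p : Fin d × Fin d) :
    partialTransposeB (cldui A B) p =
      Pi.single p (A p.1 p.2) + Pi.single p.swap (if p.1 = p.2 then 0 else B p.1 p.2) := by
  ext q
  obtain ⟨i, k⟩ := p
  obtain ⟨j, l⟩ := q
  simp only [partialTransposeB, cldui, of_apply, Pi.add_apply, Pi.single_apply,
    Prod.swap_prod_mk, Prod.mk.injEq]
  grind

theorem partialTransposeB_cldui_submatrix (A B : Matrix (Fin d) (Fin d) ℂ) {i j : Fin d}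
    (hij : i ≠ j) :
    (partialTransposeB (cldui A B)).submatrix ![(i, j), (j, i)] ![(i, j), (j, i)] =
      !![A i j, B i j; B j i, A j i] := by
  ext a b
  fin_cases a <;> fin_cases b <;> simp [partialTransposeB_cldui_row, hij, hij.symm]

theorem normSq_le_of_posSemidef_partialTransposeB_cldui {A B : Matrix (Fin d) (Fin d) ℂ}
    (hdiag : ∀ i, A i i = B i i) (hA : ∀ i j, 0 ≤ A i j) (hB : B.IsHermitian)
    (hM : (partialTransposeB (cldui A B)).PosSemidef) (i j : Fin d) :
    (Complex.normSq (B i j) : ℂ) ≤ A i j * A j i := by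
  rcases eq_or_ne i j with rfl | hij
  · rw [← hdiag, ← Complex.mul_conj, ← Complex.star_def, (IsSelfAdjoint.of_nonneg (hA i i)).star_eq]
  · have hK := hM.submatrix ![(i, j), (j, i)]
    rw [partialTransposeB_cldui_submatrix A B hij, ← hB.apply j i] at hK
    exact (posSemidef_fin_two_iff.1 hK).2.2

theorem posSemidef_partialTransposeB_cldui {A B : Matrix (Fin d) (Fin d) ℂ}
    (hA : ∀ i j, 0 ≤ A i j) (hB : B.IsHermitian)
    (h : ∀ i j, (Complex.normSq (B i j) : ℂ) ≤ A i j * A j i) :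
    (partialTransposeB (cldui A B)).PosSemidef := by
  refine .of_dotProduct_mulVec_nonneg
    (isHermitian_cldui (fun i j => .of_nonneg (hA i j)) hB).partialTransposeB fun x => ?_
  set b : Fin d × Fin d → ℂ := fun p => if p.1 = p.2 then 0 else B p.1 p.2
  set f : Fin d × Fin d → ℂ := fun p => star (x p) * (A p.1 p.2 * x p + b p * x p.swap)
  have hform : star x ⬝ᵥ (partialTransposeB (cldui A B) *ᵥ x) = ∑ p, f p := by
    refine Finset.sum_congr rfl fun p _ => ?_
    simp only [mulVec, partialTransposeB_cldui_row, add_dotProduct, single_dotProduct,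
      Pi.star_apply, f, b]
  -- `f p + f p.swap` is the quadratic form of the `2 × 2` block on `{p, p.swap}`.
  have hpair : ∀ p, 0 ≤ f p + f p.swap := by
    intro p
    have hb : star (b p) = b p.swap := by
      by_cases hp : p.1 = p.2 <;> simp [b, hp, Ne.symm, hB.apply]
    have hK : !![A p.1 p.2, b p; star (b p), A p.2 p.1].PosSemidef := by
      refine posSemidef_fin_two_iff.2 ⟨hA _ _, hA _ _, ?_⟩
      by_cases hp : p.1 = p.2
      · simpa [b, hp] using mul_nonneg (hA p.2 p.2) (hA p.2 p.2)
      · simpa [b, hp] using h p.1 p.2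
    simpa [f, hb, dotProduct, mulVec, Fin.sum_univ_two, add_comm] using
      hK.dotProduct_mulVec_nonneg ![x p, x p.swap]
  have hswap : ∑ p : Fin d × Fin d, f p.swap = ∑ p, f p :=
    Fintype.sum_equiv (Equiv.prodComm _ _) _ _ fun _ => rfl
  calc 0 ≤ (∑ p, (f p + f p.swap)) / 2 :=
        div_nonneg (Finset.sum_nonneg fun p _ => hpair p) zero_le_two
    _ = _ := by rw [Finset.sum_add_distrib, hswap, add_self_div_two, hform]

end

/-- A CLDUI state `ρ_(A,B)` is PPT if and only if
`A_{ij}·A_{ji} ≥ |B_{ij}|²` for all `i, j`. -/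
theorem cldui_ppt_iff {d : ℕ} (A B : Matrix (Fin d) (Fin d) ℂ)
    (hdiag : ∀ i, A i i = B i i)
    (hA0 : ∀ i j, 0 ≤ A i j)
    (hB : B.PosSemidef) :
    (partialTransposeB (cldui A B)).PosSemidef ↔
      ∀ i j, (Complex.normSq (B i j) : ℂ) ≤ A i j * A j i :=
  ⟨normSq_le_of_posSemidef_partialTransposeB_cldui hdiag hA0 hB.isHermitian,
    posSemidef_partialTransposeB_cldui hA0 hB.isHermitian⟩
end

section
/- Let ρ_DS = ∑_{0 ≤ i ≤ j < d} p_{ij} |D_{ij}⟩⟨D_{ij}| be a diagonal symmetric state on ℂ^d ⊗ ℂ^d, with p_{ij} ≥ 0 and ∑_{i≤j} p_{ij} = 1. Then ρ_DS is separable (i.e., a finite convex combination of tensor products τ ⊗ σ of positive semidefinite unit-trace matrices) if and only if the associated d×d matrix M_d(ρ_DS), with entries M_d(ρ_DS)_{ii} = p_{ii} and M_d(ρ_DS)_{ij} = p_{ij}/2 for i ≠ j, is completely positive, i.e., M_d(ρ_DS) = B Bᵀ for some entrywise nonnegative matrix B. -/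
/-!
If `ρ = ∑ λₘ σₘ ⊗ τₘ`, the entries `ρ_{(a,b),(a,b)} = ∑ λₘ σₘ(a,a) τₘ(b,b)` and
`ρ_{(a,b),(b,a)} = ∑ λₘ σₘ(a,b) τₘ(b,a)` both equal `M_{ab}`. With
`B_{am} = √(λₘ σₘ(a,a) τₘ(a,a))`, Cauchy–Schwarz for positive semidefinite matrices bounds the
second expression by `(B Bᵀ)_{ab}`, and AM–GM bounds `(B Bᵀ)_{ab}` by the symmetrisation of the
first, which is `M_{ab}` again; so `M = B Bᵀ`.

Conversely, let `M = B Bᵀ` with `B ≥ 0`. For a column `v` of `B` and `θ ∈ (ℤ/4)^d` put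
`w_θ = (√vᵢ · i^{θᵢ})ᵢ`. Averaging `|w_θ⟩⟨w_θ| ⊗ |w_θ⟩⟨w_θ|` over `θ` kills the entry at
`((a,b),(c,e))` unless `{a,b} = {c,e}` as multisets, where it equals `v_a v_b`. Summing over the
columns gives `ρ_DS` as a nonnegative combination of products of positive semidefinite matrices,
and normalising the factors to unit trace makes it a convex combination.
-/

open Matrix Kronecker ComplexOrder

/-- The Dicke state `|D_{ij}⟩` on `ℂ^d ⊗ ℂ^d`: `|D_{ii}⟩ = |ii⟩` and
`|D_{ij}⟩ = (|ij⟩ + |ji⟩)/√2` for `i ≠ j`. -/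
noncomputable def dicke {d : ℕ} (i j : Fin d) : (Fin d × Fin d) → ℂ :=
  if i = j then fun x => if x = (i, i) then 1 else 0
  else fun x => if x = (i, j) ∨ x = (j, i) then ((Real.sqrt 2)⁻¹ : ℝ) else 0

/-- The diagonal symmetric state `ρ_DS = ∑_{0 ≤ i ≤ j < d} p_{ij} |D_{ij}⟩⟨D_{ij}|`. -/
noncomputable def rhoDS {d : ℕ} (p : Fin d → Fin d → ℝ) :
    Matrix (Fin d × Fin d) (Fin d × Fin d) ℂ :=
  ∑ i : Fin d, ∑ j : Fin d,
    if i ≤ j then (p i j : ℂ) • Matrix.vecMulVec (dicke i j) (star (dicke i j)) else 0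

/-- The matrix `M_d(ρ_DS)`: diagonal entries `p_{ii}`, off-diagonal entries `p_{ij}/2`. -/
noncomputable def Mds {d : ℕ} (p : Fin d → Fin d → ℝ) : Matrix (Fin d) (Fin d) ℝ :=
  Matrix.of fun i j => if i = j then p i i else (if i ≤ j then p i j else p j i) / 2

/-- A real matrix `M` is completely positive if `M = B Bᵀ` for some entrywise
nonnegative matrix `B`. -/
def CompletelyPositiveMatrix {d : ℕ} (M : Matrix (Fin d) (Fin d) ℝ) : Prop :=
  ∃ (k : ℕ) (B : Matrix (Fin d) (Fin k) ℝ), (∀ i j, 0 ≤ B i j) ∧ M = B * Bᵀ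

namespace Matrix.PosSemidef

variable {ι : Type*} {A σ τ : Matrix ι ι ℂ}

theorem re_apply_self_nonneg (hA : A.PosSemidef) (i : ι) : 0 ≤ (A i i).re :=
  (Complex.nonneg_iff.1 hA.diag_nonneg).1

theorem im_apply_self (hA : A.PosSemidef) (i : ι) : (A i i).im = 0 :=
  (Complex.nonneg_iff.1 hA.diag_nonneg).2.symm

theorem re_trace_nonneg [Fintype ι] (hA : A.PosSemidef) : 0 ≤ A.trace.re :=
  (Complex.nonneg_iff.1 hA.trace_nonneg).1

theorem norm_apply_le (hA : A.PosSemidef) (a b : ι) : ‖A a b‖ ≤ √(A a a).re * √(A b b).re := by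
  have hdet := (Complex.nonneg_iff.1 (hA.submatrix ![a, b]).det_nonneg).1
  simp only [det_fin_two, submatrix_apply, Matrix.cons_val_zero, Matrix.cons_val_one,
    Matrix.cons_val_fin_one] at hdet
  rw [← hA.1.apply b a, RCLike.star_def, Complex.mul_conj, Complex.sub_re, Complex.mul_re,
    hA.im_apply_self, Complex.ofReal_re, zero_mul, sub_zero] at hdet
  rw [← Real.sqrt_mul (hA.re_apply_self_nonneg a), Complex.norm_def]
  exact Real.sqrt_le_sqrt (by linarith)

theorem re_apply_mul_apply_le (hσ : σ.PosSemidef) (hτ : τ.PosSemidef) (a b : ι) :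
    (σ a b * τ b a).re ≤ √(σ a a).re * √(τ a a).re * (√(σ b b).re * √(τ b b).re) :=
  calc (σ a b * τ b a).re ≤ ‖σ a b‖ * ‖τ b a‖ := (Complex.re_le_norm _).trans (norm_mul _ _).le
    _ ≤ √(σ a a).re * √(σ b b).re * (√(τ b b).re * √(τ a a).re) :=
        mul_le_mul (hσ.norm_apply_le a b) (hτ.norm_apply_le b a) (norm_nonneg _) (by positivity)
    _ = _ := by ring

theorem sqrt_diag_mul_sqrt_diag_le (hσ : σ.PosSemidef) (hτ : τ.PosSemidef) (a b : ι) :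
    √(σ a a).re * √(τ a a).re * (√(σ b b).re * √(τ b b).re) ≤
      ((σ a a * τ b b).re + (σ b b * τ a a).re) / 2 := by
  have hamgm := two_mul_le_add_sq (√(σ a a).re * √(τ b b).re) (√(σ b b).re * √(τ a a).re)
  simp only [mul_pow, Real.sq_sqrt (hσ.re_apply_self_nonneg _),
    Real.sq_sqrt (hτ.re_apply_self_nonneg _)] at hamgm
  simp only [Complex.mul_re, hσ.im_apply_self, hτ.im_apply_self, mul_zero, sub_zero]
  linarith

theorem exists_eq_re_trace_smul [Fintype ι] [DecidableEq ι] [Nonempty ι] (hA : A.PosSemidef) :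
    ∃ σ : Matrix ι ι ℂ, (σ.PosSemidef ∧ σ.trace = 1) ∧ A = (A.trace.re : ℂ) • σ := by
  have htr : (A.trace.re : ℂ) = A.trace :=
    (Complex.eq_re_of_ofReal_le (Complex.ofReal_zero ▸ hA.trace_nonneg)).symm
  set r := A.trace.re
  by_cases h0 : r = 0
  · refine ⟨(((Fintype.card ι : ℝ)⁻¹ : ℝ) : ℂ) • 1,
      ⟨PosSemidef.one.smul (Complex.zero_le_real.2 (by positivity)), ?_⟩, ?_⟩
    · rw [trace_smul, trace_one, smul_eq_mul, Complex.ofReal_inv, Complex.ofReal_natCast]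
      exact inv_mul_cancel₀ (by simp)
    · rw [h0, Complex.ofReal_zero, zero_smul, ← hA.trace_eq_zero_iff, ← htr, h0,
        Complex.ofReal_zero]
  · refine ⟨((r⁻¹ : ℝ) : ℂ) • A,
      ⟨hA.smul (Complex.zero_le_real.2 (inv_nonneg.2 hA.re_trace_nonneg)), ?_⟩, ?_⟩
    · rw [trace_smul, smul_eq_mul, ← htr, ← Complex.ofReal_mul, inv_mul_cancel₀ h0,
        Complex.ofReal_one]
    · rw [smul_smul, ← Complex.ofReal_mul, mul_inv_cancel₀ h0, Complex.ofReal_one, one_smul]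

end Matrix.PosSemidef

theorem CompletelyPositiveMatrix.of_separable {d : ℕ} {M : Matrix (Fin d) (Fin d) ℝ}
    (hM : M.IsSymm) {ρ : Matrix (Fin d × Fin d) (Fin d × Fin d) ℂ} (hρ : Separable ρ)
    (hdiag : ∀ a b, ρ (a, b) (a, b) = M a b) (hswap : ∀ a b, ρ (a, b) (b, a) = M a b) :
    CompletelyPositiveMatrix M := by
  obtain ⟨n, lam, σ, τ, hlam, -, hσ, hτ, rfl⟩ := hρ
  have hre {a b c e : Fin d} (h : (∑ m, (lam m : ℂ) • (σ m ⊗ₖ τ m)) (a, b) (c, e) = M a b) :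
      M a b = ∑ m, lam m * (σ m a c * τ m b e).re := by
    simpa [Matrix.sum_apply, kroneckerMap_apply, Complex.re_sum] using
      (congrArg Complex.re h).symm
  let q (a : Fin d) (m : Fin n) : ℝ := √(σ m a a).re * √(τ m a a).re
  let B : Matrix (Fin d) (Fin n) ℝ := of fun a m => √(lam m) * q a m
  refine ⟨n, B, fun _ _ => by simp only [B, q, of_apply]; positivity, ?_⟩
  ext a b
  have hBB : (B * Bᵀ) a b = ∑ m, lam m * (q a m * q b m) := by
    simp only [B, mul_apply, transpose_apply, of_apply]
    refine Finset.sum_congr rfl fun m _ => ?_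
    linear_combination q a m * q b m * Real.mul_self_sqrt (hlam m)
  apply le_antisymm
  · calc M a b = ∑ m, lam m * (σ m a b * τ m b a).re := hre (hswap a b)
      _ ≤ ∑ m, lam m * (q a m * q b m) := Finset.sum_le_sum fun m _ =>
          mul_le_mul_of_nonneg_left ((hσ m).1.re_apply_mul_apply_le (hτ m).1 a b) (hlam m)
      _ = (B * Bᵀ) a b := hBB.symm
  · calc (B * Bᵀ) a b = ∑ m, lam m * (q a m * q b m) := hBB
      _ ≤ ∑ m, lam m * (((σ m a a * τ m b b).re + (σ m b b * τ m a a).re) / 2) :=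
          Finset.sum_le_sum fun m _ =>
            mul_le_mul_of_nonneg_left ((hσ m).1.sqrt_diag_mul_sqrt_diag_le (hτ m).1 a b) (hlam m)
      _ = (M a b + M b a) / 2 := by
          rw [hre (hdiag a b), hre (hdiag b a), ← Finset.sum_add_distrib, Finset.sum_div]
          exact Finset.sum_congr rfl fun m _ => by ring
      _ = M a b := by rw [hM.apply a b, add_self_div_two]

theorem Separable.of_eq_sum_smul_kronecker {d : ℕ} {κ : Type*} [Fintype κ]
    {ρ : Matrix (Fin d × Fin d) (Fin d × Fin d) ℂ} (lam : κ → ℝ) (hlam : ∀ t, 0 ≤ lam t)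
    (σ τ : κ → Matrix (Fin d) (Fin d) ℂ) (hσ : ∀ t, (σ t).PosSemidef ∧ (σ t).trace = 1)
    (hτ : ∀ t, (τ t).PosSemidef ∧ (τ t).trace = 1)
    (hρ : ρ = ∑ t, (lam t : ℂ) • (σ t ⊗ₖ τ t)) (htr : ρ.trace = 1) : Separable ρ := by
  let e := Fintype.equivFin κ
  refine ⟨Fintype.card κ, fun m => lam (e.symm m), fun m => σ (e.symm m),
    fun m => τ (e.symm m), fun _ => hlam _, ?_, fun _ => hσ _, fun _ => hτ _, ?_⟩
  · rw [hρ, trace_sum] at htr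
    simp only [trace_smul, trace_kronecker, (hσ _).2, (hτ _).2, mul_one, smul_eq_mul] at htr
    rw [e.symm.sum_comp lam]
    exact_mod_cast htr
  · rw [hρ]
    exact (e.symm.sum_comp fun t => (lam t : ℂ) • (σ t ⊗ₖ τ t)).symm

theorem Separable.of_eq_sum_posSemidef {d : ℕ} {κ : Type*} [Fintype κ]
    {ρ : Matrix (Fin d × Fin d) (Fin d × Fin d) ℂ} (μ : κ → ℝ) (hμ : ∀ t, 0 ≤ μ t)
    (φ ψ : κ → Matrix (Fin d) (Fin d) ℂ) (hφ : ∀ t, (φ t).PosSemidef)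
    (hψ : ∀ t, (ψ t).PosSemidef) (hρ : ρ = ∑ t, (μ t : ℂ) • (φ t ⊗ₖ ψ t))
    (htr : ρ.trace = 1) : Separable ρ := by
  have : Nonempty (Fin d) := by
    refine Fin.pos_iff_nonempty.1 (Nat.pos_of_ne_zero ?_)
    rintro rfl
    simp [trace] at htr
  choose σ hσ hφσ using fun t => (hφ t).exists_eq_re_trace_smul
  choose τ hτ hψτ using fun t => (hψ t).exists_eq_re_trace_smul
  refine Separable.of_eq_sum_smul_kronecker (fun t => μ t * ((φ t).trace.re * (ψ t).trace.re))
    (fun t => ?_) σ τ hσ hτ ?_ htr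
  · exact mul_nonneg (hμ t) (mul_nonneg (hφ t).re_trace_nonneg (hψ t).re_trace_nonneg)
  · rw [hρ]
    refine Finset.sum_congr rfl fun t _ => ?_
    conv_lhs => rw [hφσ t, hψτ t]
    rw [smul_kronecker, kronecker_smul, smul_smul, smul_smul]
    push_cast
    ring_nf

theorem sum_fin_four_I_pow_mul_conj_pow {n m : ℕ} (hn : n ≤ 2) (hm : m ≤ 2) :
    ∑ x : Fin 4, (Complex.I ^ (x : ℕ)) ^ n * starRingEnd ℂ (Complex.I ^ (x : ℕ)) ^ m =
      if n = m then 4 else 0 := by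
  simp only [Fin.sum_univ_four, Fin.val_zero, Fin.val_one, Fin.val_two]
  interval_cases n <;> interval_cases m <;> norm_num [Complex.ext_iff, pow_succ]

theorem forall_ite_add_ite_eq_iff {ι : Type*} [DecidableEq ι] (a b c e : ι) :
    (∀ i, (if a = i then 1 else 0) + (if b = i then 1 else 0) =
      (if c = i then 1 else 0) + (if e = i then (1 : ℕ) else 0)) ↔ s(a, b) = s(c, e) := by
  rw [Sym2.eq_iff]
  constructor
  · intro h
    have := h a; have := h b; have := h c
    grind
  · rintro (⟨rfl, rfl⟩ | ⟨rfl, rfl⟩) i <;> omega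

theorem sum_I_pow_mul_conj_I_pow {ι : Type*} [Fintype ι] [DecidableEq ι] (a b c e : ι) :
    ∑ θ : ι → Fin 4, Complex.I ^ (θ a : ℕ) * Complex.I ^ (θ b : ℕ) *
        (starRingEnd ℂ (Complex.I ^ (θ c : ℕ)) * starRingEnd ℂ (Complex.I ^ (θ e : ℕ))) =
      if s(a, b) = s(c, e) then 4 ^ Fintype.card ι else 0 := by
  let n (a b i : ι) : ℕ := (if a = i then 1 else 0) + (if b = i then 1 else 0)
  have hn (a b i : ι) : n a b i ≤ 2 := by simp only [n]; split_ifs <;> norm_num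
  have hprod (θ : ι → Fin 4) : Complex.I ^ (θ a : ℕ) * Complex.I ^ (θ b : ℕ) *
      (starRingEnd ℂ (Complex.I ^ (θ c : ℕ)) * starRingEnd ℂ (Complex.I ^ (θ e : ℕ))) =
      ∏ i, (Complex.I ^ (θ i : ℕ)) ^ n a b i * starRingEnd ℂ (Complex.I ^ (θ i : ℕ)) ^ n c e i := by
    simp only [n, pow_add, Finset.prod_mul_distrib, Finset.prod_pow_boole, Finset.mem_univ,
      if_true]
  simp only [hprod]
  rw [← Fintype.prod_sum (fun i (x : Fin 4) =>
    (Complex.I ^ (x : ℕ)) ^ n a b i * starRingEnd ℂ (Complex.I ^ (x : ℕ)) ^ n c e i)]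
  simp only [sum_fin_four_I_pow_mul_conj_pow (hn _ _ _) (hn _ _ _), Fintype.prod_ite_zero,
    Finset.prod_const, Finset.card_univ, n, forall_ite_add_ite_eq_iff]

/-- Fourth roots of unity rather than signs, so that `i^{2θ}` also averages to zero: this is what
separates `|aa⟩⟨cc|` (for `a ≠ c`) from the diagonal. -/
noncomputable def phaseVec {ι : Type*} (v : ι → ℝ) (θ : ι → Fin 4) : ι → ℂ :=
  fun i => (√(v i) : ℂ) * Complex.I ^ (θ i : ℕ)

theorem sum_phaseVec_mul {ι : Type*} [Fintype ι] [DecidableEq ι] {v : ι → ℝ}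
    (hv : ∀ i, 0 ≤ v i) (a b c e : ι) :
    ∑ θ, phaseVec v θ a * star (phaseVec v θ c) * (phaseVec v θ b * star (phaseVec v θ e)) =
      if s(a, b) = s(c, e) then ((4 ^ Fintype.card ι * (v a * v b) : ℝ) : ℂ) else 0 := by
  have hterm (θ : ι → Fin 4) :
      phaseVec v θ a * star (phaseVec v θ c) * (phaseVec v θ b * star (phaseVec v θ e)) =
        ((√(v a) * √(v b) * √(v c) * √(v e) : ℝ) : ℂ) *
          (Complex.I ^ (θ a : ℕ) * Complex.I ^ (θ b : ℕ) *
            (starRingEnd ℂ (Complex.I ^ (θ c : ℕ)) * starRingEnd ℂ (Complex.I ^ (θ e : ℕ)))) := by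
    simp only [phaseVec, RCLike.star_def, map_mul, Complex.conj_ofReal]
    push_cast
    ring
  rw [Finset.sum_congr rfl fun θ _ => hterm θ, ← Finset.mul_sum, sum_I_pow_mul_conj_I_pow, mul_ite,
    mul_zero]
  split_ifs with h
  · have hsqrt : √(v a) * √(v b) * √(v c) * √(v e) = v a * v b := by
      rcases Sym2.eq_iff.1 h with ⟨rfl, rfl⟩ | ⟨rfl, rfl⟩ <;>
        linear_combination (√(v b) * √(v b)) * Real.mul_self_sqrt (hv a) +
          v a * Real.mul_self_sqrt (hv b)
    rw [hsqrt]
    push_cast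
    ring
  · rfl

theorem sum_kronecker_phaseVec_apply {ι κ : Type*} [Fintype ι] [DecidableEq ι] [Fintype κ]
    {B : Matrix ι κ ℝ} (hB : ∀ i k, 0 ≤ B i k) (a b c e : ι) :
    (∑ t : κ × (ι → Fin 4), (((4 ^ Fintype.card ι)⁻¹ : ℝ) : ℂ) •
      (vecMulVec (phaseVec (fun i => B i t.1) t.2) (star (phaseVec (fun i => B i t.1) t.2)) ⊗ₖ
        vecMulVec (phaseVec (fun i => B i t.1) t.2) (star (phaseVec (fun i => B i t.1) t.2))))
        (a, b) (c, e) =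
      if s(a, b) = s(c, e) then ((B * Bᵀ) a b : ℂ) else 0 := by
  simp only [Matrix.sum_apply, Matrix.smul_apply, kroneckerMap_apply, vecMulVec_apply,
    Pi.star_apply, smul_eq_mul, Fintype.sum_prod_type, ← Finset.mul_sum,
    sum_phaseVec_mul fun i => hB i _]
  split_ifs
  · simp only [← Complex.ofReal_sum, ← Complex.ofReal_mul, ← Finset.mul_sum, mul_apply,
      transpose_apply]
    rw [inv_mul_cancel_left₀ (by positivity)]
  · simp

namespace Sym2

variable {α : Type*} [LinearOrder α]

theorem mk_inf_sup (a b : α) : s(a ⊓ b, a ⊔ b) = s(a, b) := by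
  rcases le_total a b with h | h
  · rw [inf_eq_left.2 h, sup_eq_right.2 h]
  · rw [inf_eq_right.2 h, sup_eq_left.2 h, eq_swap]

theorem le_and_mk_eq_iff {i j a b : α} : i ≤ j ∧ s(i, j) = s(a, b) ↔ i = a ⊓ b ∧ j = a ⊔ b := by
  constructor
  · rintro ⟨hij, h⟩
    rcases eq_iff.1 h with ⟨rfl, rfl⟩ | ⟨rfl, rfl⟩ <;> simp [hij]
  · rintro ⟨rfl, rfl⟩
    exact ⟨inf_le_sup, mk_inf_sup a b⟩

end Sym2

theorem dicke_mul_star_dicke {d : ℕ} (i j a b c e : Fin d) :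
    dicke i j (a, b) * star (dicke i j (c, e)) =
      if s(i, j) = s(a, b) ∧ s(i, j) = s(c, e) then (if i = j then 1 else 2⁻¹) else 0 := by
  unfold dicke
  by_cases hij : i = j
  · subst hij
    simp only [if_true, Sym2.eq_iff, Prod.ext_iff, or_self]
    split_ifs <;> simp_all <;> grind
  · have hsqrt : ((√2 : ℝ) : ℂ)⁻¹ * ((√2 : ℝ) : ℂ)⁻¹ = 2⁻¹ := by
      rw [← mul_inv, ← Complex.ofReal_mul, Real.mul_self_sqrt zero_le_two]
      norm_num
    simp only [if_neg hij, Sym2.eq_iff, Prod.ext_iff]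
    split_ifs <;> simp_all <;> grind

theorem Mds_apply_eq_inf_sup {d : ℕ} (p : Fin d → Fin d → ℝ) (a b : Fin d) :
    Mds p a b = p (a ⊓ b) (a ⊔ b) * if a = b then 1 else 2⁻¹ := by
  rcases lt_trichotomy a b with h | rfl | h
  · simp [Mds, h.ne, h.le, div_eq_mul_inv]
  · simp [Mds]
  · simp [Mds, h.ne', h.not_ge, h.le, div_eq_mul_inv]

theorem Mds_apply_eq_add_div_two {d : ℕ} (p : Fin d → Fin d → ℝ) (a b : Fin d) :
    Mds p a b = ((if a ≤ b then p a b else 0) + (if b ≤ a then p b a else 0)) / 2 := by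
  rcases lt_trichotomy a b with h | rfl | h
  · simp [Mds, h.ne, h.le, h.not_ge]
  · simp [Mds]
  · simp [Mds, h.ne', h.not_ge, h.le]

theorem Mds_isSymm {d : ℕ} (p : Fin d → Fin d → ℝ) : (Mds p).IsSymm :=
  IsSymm.ext fun a b => by
    simp only [Mds_apply_eq_inf_sup, inf_comm b, sup_comm b, @eq_comm _ b a]

theorem rhoDS_apply {d : ℕ} (p : Fin d → Fin d → ℝ) (a b c e : Fin d) :
    rhoDS p (a, b) (c, e) = if s(a, b) = s(c, e) then (Mds p a b : ℂ) else 0 := by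
  have hterm (i j : Fin d) :
      (if i ≤ j then (p i j : ℂ) • vecMulVec (dicke i j) (star (dicke i j)) else 0) (a, b) (c, e)
        = if i = a ⊓ b ∧ j = a ⊔ b then
            (if s(a, b) = s(c, e) then (Mds p a b : ℂ) else 0) else 0 := by
    by_cases hij : i = a ⊓ b ∧ j = a ⊔ b
    · obtain ⟨rfl, rfl⟩ := hij
      rw [if_pos inf_le_sup, if_pos ⟨rfl, rfl⟩, Matrix.smul_apply, vecMulVec_apply, Pi.star_apply,
        dicke_mul_star_dicke, Sym2.mk_inf_sup, Mds_apply_eq_inf_sup]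
      simp only [true_and, smul_eq_mul, inf_eq_sup]
      split_ifs <;> push_cast <;> ring
    · rw [if_neg hij]
      split_ifs with hle
      · rw [Matrix.smul_apply, vecMulVec_apply, Pi.star_apply, dicke_mul_star_dicke,
          if_neg fun h => hij (Sym2.le_and_mk_eq_iff.1 ⟨hle, h.1⟩), smul_zero]
      · rfl
  simp only [rhoDS, Matrix.sum_apply, hterm, ite_and, Finset.sum_ite_irrel, Finset.sum_ite_eq',
    Finset.mem_univ, if_true, Finset.sum_const_zero]

theorem trace_rhoDS {d : ℕ} (p : Fin d → Fin d → ℝ) :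
    (rhoDS p).trace = ((∑ i, ∑ j, if i ≤ j then p i j else 0 : ℝ) : ℂ) := by
  have hsum : ∑ a, ∑ b, Mds p a b = ∑ i, ∑ j, if i ≤ j then p i j else 0 := by
    simp only [Mds_apply_eq_add_div_two, ← Finset.sum_div, Finset.sum_add_distrib]
    rw [Finset.sum_comm (f := fun a b => if b ≤ a then p b a else 0)]
    ring
  rw [trace, Fintype.sum_prod_type, ← hsum, Complex.ofReal_sum]
  simp only [diag_apply, rhoDS_apply, if_true, Complex.ofReal_sum]

theorem rhoDS_separable_iff_Mds_completelyPositive_general {d : ℕ}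
    (p : Fin d → Fin d → ℝ)
    (hp1 : ∑ i : Fin d, ∑ j : Fin d, (if i ≤ j then p i j else 0) = 1) :
    Separable (rhoDS p) ↔ CompletelyPositiveMatrix (Mds p) := by
  constructor
  · intro h
    refine CompletelyPositiveMatrix.of_separable (Mds_isSymm p) h (fun a b => ?_) (fun a b => ?_)
    · rw [rhoDS_apply, if_pos rfl]
    · rw [rhoDS_apply, if_pos Sym2.eq_swap]
  · rintro ⟨k, B, hB, hM⟩
    let P (t : Fin k × (Fin d → Fin 4)) : Matrix (Fin d) (Fin d) ℂ :=
      vecMulVec (phaseVec (fun i => B i t.1) t.2) (star (phaseVec (fun i => B i t.1) t.2))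
    refine Separable.of_eq_sum_posSemidef (fun _ => (4 ^ d)⁻¹) (fun _ => by positivity) P P
      (fun _ => posSemidef_vecMulVec_self_star _) (fun _ => posSemidef_vecMulVec_self_star _)
      ?_ (by rw [trace_rhoDS, hp1, Complex.ofReal_one])
    ext ⟨a, b⟩ ⟨c, e⟩
    rw [rhoDS_apply, hM, ← sum_kronecker_phaseVec_apply hB, Fintype.card_fin]

/-- A diagonal symmetric state is separable if and only if its associated matrix
`M_d(ρ_DS)` is completely positive. -/
theorem rhoDS_separable_iff_Mds_completelyPositive {d : ℕ}
    (p : Fin d → Fin d → ℝ)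
    (hp0 : ∀ i j : Fin d, i ≤ j → 0 ≤ p i j)
    (hp1 : ∑ i : Fin d, ∑ j : Fin d, (if i ≤ j then p i j else 0) = 1) :
    Separable (rhoDS p) ↔ CompletelyPositiveMatrix (Mds p) :=
  rhoDS_separable_iff_Mds_completelyPositive_general p hp1
end
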